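/- For every n ≥ 1, the flat application S_(2n+1) of S = λx.λy.λz. x z (y z) is βη-equivalent to λx.λy. x y (x y (… (x y (λz. x z (y z)))…)) with n occurrences of 'x y' applied; consequently the terms S_(2n+1) for distinct n are pairwise non-βη-equivalent, so S does not have the ρ-property. -/

import Mathlib

/-!
Write `M n` for `λxy. Sbody n`, so `M 0 = S`. Both `M (n+1) S S` and `S S (M n S S)` β-reduce to
`Sbody (n+1)[x, y := S, S]`, and `S S (λxy. N) ↠β λxy. x y N`; by induction `M n S S =βη M (n+1)`,
hence `S_(2n+1) =βη M n`. Every `M n` is βη-normal, and βη-reduction is confluent (Hindley–Rosen: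
β is confluent by Takahashi's complete developments, η is confluent, and a β-step commutes with an
η-step), so distinct `M n` are not convertible. If `S_(i+1) =βη S_(j+1)` with `i ≠ j`, applying
`i + 2`, resp. `j + 2`, further copies of `S` gives `S_(2i+3) =βη S_(i+j+3) =βη S_(2j+3)`.
-/

/-- Untyped lambda terms in de Bruijn representation. -/
inductive Lam where
  | var : Nat → Lam
  | app : Lam → Lam → Lam
  | lam : Lam → Lam
deriving DecidableEq

namespace Lam

/-- Lift (shift by one) all free variables with index ≥ `c`. -/
def lift (c : Nat) : Lam → Lam
  | var n => if n < c then var n else var (n + 1)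
  | app a b => app (lift c a) (lift c b)
  | lam a => lam (lift (c + 1) a)

/-- Substitute `s` for the free variable with index `d`. -/
def subst (d : Nat) (s : Lam) : Lam → Lam
  | var n => if n = d then s else if d < n then var (n - 1) else var n
  | app a b => app (subst d s a) (subst d s b)
  | lam a => lam (subst (d + 1) (lift 0 s) a)

/-- One-step βη-reduction (compatible closure of β and η). -/
inductive Step : Lam → Lam → Prop
  | beta (a b : Lam) : Step (app (lam a) b) (subst 0 b a)
  | eta (a : Lam) : Step (lam (app (lift 0 a) (var 0))) a
  | appL {a a' : Lam} (b : Lam) : Step a a' → Step (app a b) (app a' b)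
  | appR (a : Lam) {b b' : Lam} : Step b b' → Step (app a b) (app a b')
  | xi {a a' : Lam} : Step a a' → Step (lam a) (lam a')

/-- βη-equivalence: the equivalence relation generated by one-step βη-reduction. -/
def BetaEtaEq (a b : Lam) : Prop := Relation.EqvGen Step a b

/-- The B combinator λf.λg.λx. f (g x). -/
def B : Lam := lam (lam (lam (app (var 2) (app (var 1) (var 0)))))

/-- `flat X n` is the (n+1)-fold flat left application, i.e. `X_(n+1)`:
`flat X 0 = X = X_(1)` and `flat X (n+1) = (flat X n) X = X_(n+2)`. -/
def flat (X : Lam) : Nat → Lam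
  | 0 => X
  | n + 1 => app (flat X n) X

end Lam

open Lam

/-- The S combinator λx.λy.λz. x z (y z). -/
def S : Lam := lam (lam (lam (app (app (var 2) (var 0)) (app (var 1) (var 0)))))

/-- Body (under λx.λy., so x = var 1, y = var 0) of the normal form of S_(2n+1):
n-fold application of (x y) to λz. x z (y z). -/
def Sbody : ℕ → Lam
  | 0 => lam (app (app (var 2) (var 0)) (app (var 1) (var 0)))
  | n + 1 => app (app (var 1) (var 0)) (Sbody n)

namespace Relation

variable {α : Type*} {r s : α → α → Prop}

def Confluent (r : α → α → Prop) : Prop :=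
  ∀ ⦃a b c⦄, ReflTransGen r a b → ReflTransGen r a c → Join (ReflTransGen r) b c

theorem confluent_of_diamond
    (h : ∀ a b c, r a b → r a c → ∃ d, ReflGen r b d ∧ ReflGen r c d) : Confluent r :=
  fun _ _ _ ↦ church_rosser fun a b c hab hac ↦
    let ⟨d, hbd, hcd⟩ := h a b c hab hac
    ⟨d, hbd, hcd.to_reflTransGen⟩

theorem ReflGen.lift {β : Type*} {p : β → β → Prop} (f : α → β)
    (h : ∀ a b, r a b → p (f a) (f b)) {a b : α} : ReflGen r a b → ReflGen p (f a) (f b)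
  | .refl => .refl
  | .single hab => .single (h _ _ hab)

theorem EqvGen.lift {β : Type*} {p : β → β → Prop} (f : α → β)
    (h : ∀ a b, r a b → p (f a) (f b)) {a b : α} (hab : EqvGen r a b) : EqvGen p (f a) (f b) := by
  induction hab with
  | rel _ _ hab => exact .rel _ _ (h _ _ hab)
  | refl => exact .refl _
  | symm _ _ _ ih => exact .symm _ _ ih
  | trans _ _ _ _ _ ih₁ ih₂ => exact .trans _ _ _ ih₁ ih₂

theorem reflTransGen_commute_of_step
    (h : ∀ a b c, r a b → s a c → ∃ d, ReflTransGen s b d ∧ ReflGen r c d) {a b c : α}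
    (hab : ReflTransGen r a b) (hac : ReflTransGen s a c) :
    ∃ d, ReflTransGen s b d ∧ ReflTransGen r c d := by
  have strip : ∀ {a b c}, r a b → ReflTransGen s a c → ∃ d, ReflTransGen s b d ∧ ReflGen r c d := by
    intro a b c hab hac
    induction hac using ReflTransGen.head_induction_on generalizing b with
    | refl => exact ⟨b, .refl, .single hab⟩
    | head has _ ih =>
      obtain ⟨d, hbd, hd⟩ := h _ _ _ hab has
      cases hd with
      | refl => exact ⟨_, hbd.trans ‹_›, .refl⟩
      | single hd =>
        obtain ⟨e, hde, hce⟩ := ih hd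
        exact ⟨e, hbd.trans hde, hce⟩
  induction hab using ReflTransGen.head_induction_on generalizing c with
  | refl => exact ⟨c, hac, .refl⟩
  | head har _ ih =>
    obtain ⟨d, hd, hcd⟩ := strip har hac
    obtain ⟨e, hbe, hde⟩ := ih hd
    exact ⟨e, hbe, hcd.to_reflTransGen.trans hde⟩

/-- The Hindley–Rosen lemma. -/
theorem Confluent.sup (hr : Confluent r) (hs : Confluent s)
    (hrs : ∀ {a b c}, ReflTransGen r a b → ReflTransGen s a c →
      ∃ d, ReflTransGen s b d ∧ ReflTransGen r c d) : Confluent (r ⊔ s) := by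
  have hT : ReflTransGen (r ⊔ s) = ReflTransGen (Comp (ReflTransGen r) (ReflTransGen s)) := by
    refine le_antisymm (ReflTransGen.mono ?_) ?_
    · rintro a b (hab | hab)
      exacts [⟨b, .single hab, .refl⟩, ⟨a, .refl, .single hab⟩]
    · refine reflTransGen_le_of_le ?_
      rintro a b ⟨m, ham, hmb⟩
      exact (ReflTransGen.mono (fun _ _ ↦ Or.inl) _ _ ham).trans
        (ReflTransGen.mono (fun _ _ ↦ Or.inr) _ _ hmb)
  rw [Confluent, hT]
  refine confluent_of_diamond ?_
  rintro a b c ⟨x, hax, hxb⟩ ⟨y, hay, hyc⟩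
  obtain ⟨z, hxz, hyz⟩ := hr hax hay
  obtain ⟨u, hzu, hbu⟩ := hrs hxz hxb
  obtain ⟨v, hzv, hcv⟩ := hrs hyz hyc
  obtain ⟨w, huw, hvw⟩ := hs hzu hzv
  exact ⟨w, .single ⟨u, hbu, huw⟩, .single ⟨v, hcv, hvw⟩⟩

theorem Confluent.eq_of_eqvGen (hr : Confluent r) {a b : α} (ha : ∀ c, ¬ r a c)
    (hb : ∀ c, ¬ r b c) (hab : EqvGen r a b) : a = b := by
  have hjoin : Equivalence (Join (ReflTransGen r)) :=
    equivalence_join fun _ _ _ hab hac ↦ hr hab hac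
  obtain ⟨c, hac, hbc⟩ := hjoin.eqvGen_iff.mp (hab.mono fun x y h ↦ ⟨y, .single h, .refl⟩)
  rw [ReflTransGen.cases_head_iff] at hac hbc
  grind

end Relation

open Relation

namespace Lam

theorem lift_lift_of_le (t : Lam) {c c' : ℕ} (h : c' ≤ c) :
    lift (c + 1) (lift c' t) = lift c' (lift c t) := by
  induction t generalizing c c' with
  | var n => grind [lift]
  | app a b iha ihb => simp only [lift, iha h, ihb h]
  | lam a ih => simp only [lift, ih (Nat.succ_le_succ h)]

theorem subst_lift (t : Lam) (d : ℕ) (s : Lam) : subst d s (lift d t) = t := by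
  induction t generalizing d s with
  | var n => grind [lift, subst]
  | app a b iha ihb => simp only [lift, subst, iha, ihb]
  | lam a ih => simp only [lift, subst, ih]

theorem subst_var_lift_succ (t : Lam) (d : ℕ) : subst d (var d) (lift (d + 1) t) = t := by
  induction t generalizing d with
  | var n => grind [lift, subst]
  | app a b iha ihb => simp only [lift, subst, iha, ihb]
  | lam a ih => simpa [lift, subst] using ih (d + 1)

theorem lift_subst_of_le (t : Lam) {c d : ℕ} (s : Lam) (h : c ≤ d) :
    lift c (subst d s t) = subst (d + 1) (lift c s) (lift c t) := by
  induction t generalizing c d s with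
  | var n => grind [lift, subst]
  | app a b iha ihb => simp only [subst, lift, iha _ h, ihb _ h]
  | lam a ih =>
    simp only [subst, lift, ih _ (Nat.succ_le_succ h), lift_lift_of_le s (Nat.zero_le c)]

theorem lift_subst_of_ge (t : Lam) {c d : ℕ} (s : Lam) (h : d ≤ c) :
    lift c (subst d s t) = subst d (lift c s) (lift (c + 1) t) := by
  induction t generalizing c d s with
  | var n => grind [lift, subst]
  | app a b iha ihb => simp only [subst, lift, iha _ h, ihb _ h]
  | lam a ih =>
    simp only [subst, lift, ih _ (Nat.succ_le_succ h), lift_lift_of_le s (Nat.zero_le c)]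

theorem subst_subst_of_le (t : Lam) {d e : ℕ} (u v : Lam) (h : e ≤ d) :
    subst d v (subst e u t) = subst e (subst d v u) (subst (d + 1) (lift e v) t) := by
  induction t generalizing d e u v with
  | var n => grind [lift, subst, subst_lift]
  | app a b iha ihb => simp only [subst, iha _ _ h, ihb _ _ h]
  | lam a ih =>
    simp only [subst, ih _ _ (Nat.succ_le_succ h), lift_subst_of_le u v (Nat.zero_le d),
      lift_lift_of_le v (Nat.zero_le e)]

theorem lift_injective (c : ℕ) : Function.Injective (lift c) := by
  intro a b h
  induction a generalizing b c with
  | var n => cases b <;> grind [lift]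
  | app a₁ a₂ ih₁ ih₂ => cases b <;> grind [lift]
  | lam a ih => cases b <;> grind [lift]

theorem lift_eq_app {c : ℕ} {t a b : Lam} (h : lift c t = app a b) :
    ∃ t₁ t₂, t = app t₁ t₂ ∧ lift c t₁ = a ∧ lift c t₂ = b := by
  cases t <;> grind [lift]

theorem lift_eq_lam {c : ℕ} {t a : Lam} (h : lift c t = lam a) :
    ∃ t₁, t = lam t₁ ∧ lift (c + 1) t₁ = a := by
  cases t <;> grind [lift]

theorem lift_succ_eq_var_zero {c : ℕ} {t : Lam} (h : lift (c + 1) t = var 0) : t = var 0 := by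
  cases t <;> grind [lift]

theorem exists_lift_of_lift_succ_eq_lift {t x : Lam} {c c' : ℕ} (hc : c' ≤ c)
    (h : lift (c + 1) t = lift c' x) : ∃ y, t = lift c' y ∧ x = lift c y := by
  induction t generalizing x c c' with
  | var n =>
    cases x with
    | var m =>
      by_cases hn : n < c'
      · exact ⟨var n, by grind [lift], by grind [lift]⟩
      · exact ⟨var (n - 1), by grind [lift], by grind [lift]⟩
    | _ => grind [lift]
  | app a b iha ihb =>
    obtain ⟨xa, xb, rfl, ha, hb⟩ := lift_eq_app h.symm
    obtain ⟨ya, rfl, rfl⟩ := iha hc ha.symm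
    obtain ⟨yb, rfl, rfl⟩ := ihb hc hb.symm
    exact ⟨app ya yb, rfl, rfl⟩
  | lam a ih =>
    obtain ⟨xa, rfl, ha⟩ := lift_eq_lam h.symm
    obtain ⟨y, rfl, rfl⟩ := ih (Nat.succ_le_succ hc) ha.symm
    exact ⟨lam y, rfl, rfl⟩

inductive Compatible (r : Lam → Lam → Prop) : Lam → Lam → Prop
  | root {a b : Lam} : r a b → Compatible r a b
  | appL {a a' : Lam} (b : Lam) : Compatible r a a' → Compatible r (app a b) (app a' b)
  | appR (a : Lam) {b b' : Lam} : Compatible r b b' → Compatible r (app a b) (app a b')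
  | xi {a a' : Lam} : Compatible r a a' → Compatible r (lam a) (lam a')

inductive BetaRedex : Lam → Lam → Prop
  | mk (a b : Lam) : BetaRedex (app (lam a) b) (subst 0 b a)

inductive EtaRedex : Lam → Lam → Prop
  | mk (a : Lam) : EtaRedex (lam (app (lift 0 a) (var 0))) a

abbrev BetaStep : Lam → Lam → Prop := Compatible BetaRedex

abbrev EtaStep : Lam → Lam → Prop := Compatible EtaRedex

theorem step_eq_sup : Step = BetaStep ⊔ EtaStep := by
  ext a b
  constructor
  · intro h
    induction h with
    | beta a b => exact .inl (.root (.mk a b))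
    | eta a => exact .inr (.root (.mk a))
    | appL b _ ih => exact ih.imp (.appL b) (.appL b)
    | appR a _ ih => exact ih.imp (.appR a) (.appR a)
    | xi _ ih => exact ih.imp .xi .xi
  · have : ∀ {r : Lam → Lam → Prop}, r ≤ Step → Compatible r ≤ Step := by
      intro r hr a b h
      induction h with
      | root h => exact hr _ _ h
      | appL b _ ih => exact .appL b ih
      | appR a _ ih => exact .appR a ih
      | xi _ ih => exact .xi ih
    rintro (h | h)
    · exact this (fun _ _ ⟨a, b⟩ ↦ .beta a b) _ _ h
    · exact this (fun _ _ ⟨a⟩ ↦ .eta a) _ _ h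

namespace Compatible

variable {r : Lam → Lam → Prop}

theorem reflTransGen_app {a a' b b' : Lam} (ha : ReflTransGen (Compatible r) a a')
    (hb : ReflTransGen (Compatible r) b b') :
    ReflTransGen (Compatible r) (app a b) (app a' b') :=
  (ReflTransGen.lift (app · b) (fun _ _ ↦ appL b) _ _ ha).trans
    (ReflTransGen.lift (app a') (fun _ _ ↦ appR a') _ _ hb)

theorem reflTransGen_lam {a a' : Lam} (h : ReflTransGen (Compatible r) a a') :
    ReflTransGen (Compatible r) (lam a) (lam a') :=
  ReflTransGen.lift lam (fun _ _ ↦ xi) _ _ h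

theorem lift (hr : ∀ c a b, r a b → r (Lam.lift c a) (Lam.lift c b)) {a b : Lam}
    (h : Compatible r a b) (c : ℕ) : Compatible r (Lam.lift c a) (Lam.lift c b) := by
  induction h generalizing c with
  | root h => exact root (hr c _ _ h)
  | appL b _ ih => exact appL _ (ih c)
  | appR a _ ih => exact appR _ (ih c)
  | xi _ ih => exact xi (ih (c + 1))

theorem subst (hr : ∀ d s a b, r a b → r (Lam.subst d s a) (Lam.subst d s b)) {a b : Lam}
    (h : Compatible r a b) (d : ℕ) (s : Lam) :
    Compatible r (Lam.subst d s a) (Lam.subst d s b) := by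
  induction h generalizing d s with
  | root h => exact root (hr d s _ _ h)
  | appL b _ ih => exact appL _ (ih d s)
  | appR a _ ih => exact appR _ (ih d s)
  | xi _ ih => exact xi (ih (d + 1) _)

theorem subst_right (hr : ∀ c a b, r a b → r (Lam.lift c a) (Lam.lift c b)) (t : Lam)
    {s s' : Lam} (h : Compatible r s s') (d : ℕ) :
    ReflTransGen (Compatible r) (Lam.subst d s t) (Lam.subst d s' t) := by
  induction t generalizing d s s' with
  | var n =>
    simp only [Lam.subst]
    split_ifs
    exacts [.single h, .refl, .refl]
  | app a b iha ihb => exact reflTransGen_app (iha h d) (ihb h d)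
  | lam a ih => exact reflTransGen_lam (ih (h.lift hr 0) (d + 1))

theorem exists_of_lift (hr : ∀ c t u, r (Lam.lift c t) u → ∃ t', u = Lam.lift c t' ∧ r t t')
    {c : ℕ} {t u : Lam} (h : Compatible r (Lam.lift c t) u) :
    ∃ t', u = Lam.lift c t' ∧ Compatible r t t' := by
  generalize hv : Lam.lift c t = v at h
  induction h generalizing c t with
  | root h =>
    subst hv
    obtain ⟨t', rfl, ht⟩ := hr c t _ h
    exact ⟨t', rfl, root ht⟩
  | appL b _ ih =>
    obtain ⟨t₁, t₂, rfl, h₁, rfl⟩ := lift_eq_app hv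
    obtain ⟨t', rfl, ht⟩ := ih h₁
    exact ⟨app t' t₂, rfl, appL t₂ ht⟩
  | appR a _ ih =>
    obtain ⟨t₁, t₂, rfl, rfl, h₂⟩ := lift_eq_app hv
    obtain ⟨t', rfl, ht⟩ := ih h₂
    exact ⟨app t₁ t', rfl, appR t₁ ht⟩
  | xi _ ih =>
    obtain ⟨t₁, rfl, h₁⟩ := lift_eq_lam hv
    obtain ⟨t', rfl, ht⟩ := ih h₁
    exact ⟨lam t', rfl, xi ht⟩

end Compatible

theorem BetaRedex.exists_of_lift {c : ℕ} {t u : Lam} (h : BetaRedex (lift c t) u) :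
    ∃ t', u = lift c t' ∧ BetaRedex t t' := by
  generalize hv : lift c t = v at h
  obtain ⟨a, b⟩ := h
  obtain ⟨t₁, t₂, rfl, h₁, rfl⟩ := lift_eq_app hv
  obtain ⟨t₃, rfl, rfl⟩ := lift_eq_lam h₁
  exact ⟨subst 0 t₂ t₃, (lift_subst_of_ge t₃ t₂ (Nat.zero_le c)).symm, .mk t₃ t₂⟩

theorem EtaRedex.lift {t u : Lam} (h : EtaRedex t u) (c : ℕ) :
    EtaRedex (Lam.lift c t) (Lam.lift c u) := by
  cases h
  simpa [Lam.lift, lift_lift_of_le u (Nat.zero_le c)] using EtaRedex.mk (Lam.lift c u)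

theorem EtaRedex.subst {t u : Lam} (h : EtaRedex t u) (d : ℕ) (s : Lam) :
    EtaRedex (Lam.subst d s t) (Lam.subst d s u) := by
  cases h
  simpa [Lam.subst, lift_subst_of_le u s (Nat.zero_le d)] using EtaRedex.mk (Lam.subst d s u)

theorem EtaRedex.exists_of_lift {c : ℕ} {t u : Lam} (h : EtaRedex (Lam.lift c t) u) :
    ∃ t', u = Lam.lift c t' ∧ EtaRedex t t' := by
  generalize hv : Lam.lift c t = v at h
  obtain ⟨u⟩ := h
  obtain ⟨t₁, rfl, h₁⟩ := lift_eq_lam hv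
  obtain ⟨t₂, t₃, rfl, h₂, h₃⟩ := lift_eq_app h₁
  obtain rfl := lift_succ_eq_var_zero h₃
  obtain ⟨y, rfl, rfl⟩ := exists_lift_of_lift_succ_eq_lift (Nat.zero_le c) h₂
  exact ⟨y, rfl, .mk y⟩

inductive ParBeta : Lam → Lam → Prop
  | var (n : ℕ) : ParBeta (var n) (var n)
  | app {a a' b b' : Lam} : ParBeta a a' → ParBeta b b' → ParBeta (app a b) (app a' b')
  | lam {a a' : Lam} : ParBeta a a' → ParBeta (lam a) (lam a')
  | beta {a a' b b' : Lam} : ParBeta a a' → ParBeta b b' → ParBeta (app (lam a) b) (subst 0 b' a')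

namespace ParBeta

protected theorem refl (a : Lam) : ParBeta a a := by
  induction a with
  | var n => exact .var n
  | app a b iha ihb => exact .app iha ihb
  | lam a ih => exact .lam ih

theorem of_betaStep {a b : Lam} (h : BetaStep a b) : ParBeta a b := by
  induction h with
  | root h => obtain ⟨a, b⟩ := h; exact .beta (.refl a) (.refl b)
  | appL b _ ih => exact .app ih (.refl b)
  | appR a _ ih => exact .app (.refl a) ih
  | xi _ ih => exact .lam ih

theorem reflTransGen_betaStep {a b : Lam} (h : ParBeta a b) : ReflTransGen BetaStep a b := by
  induction h with
  | var n => exact .refl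
  | app _ _ iha ihb => exact Compatible.reflTransGen_app iha ihb
  | lam _ ih => exact Compatible.reflTransGen_lam ih
  | beta _ _ iha ihb =>
    exact (Compatible.reflTransGen_app (Compatible.reflTransGen_lam iha) ihb).tail
      (.root (.mk _ _))

theorem lift {a b : Lam} (h : ParBeta a b) (c : ℕ) : ParBeta (Lam.lift c a) (Lam.lift c b) := by
  induction h generalizing c with
  | var n => exact .refl _
  | app _ _ iha ihb => exact .app (iha c) (ihb c)
  | lam _ ih => exact .lam (ih (c + 1))
  | beta _ _ iha ihb =>
    rw [Lam.lift, Lam.lift, lift_subst_of_ge _ _ (Nat.zero_le c)]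
    exact .beta (iha (c + 1)) (ihb c)

theorem subst {t t' s s' : Lam} (ht : ParBeta t t') (hs : ParBeta s s') (d : ℕ) :
    ParBeta (Lam.subst d s t) (Lam.subst d s' t') := by
  induction ht generalizing d s s' with
  | var n => simp only [Lam.subst]; split_ifs <;> first | exact hs | exact .refl _
  | app _ _ iha ihb => exact .app (iha hs d) (ihb hs d)
  | lam _ ih => exact .lam (ih (hs.lift 0) (d + 1))
  | beta _ _ iha ihb =>
    rw [Lam.subst, Lam.subst, subst_subst_of_le _ _ _ (Nat.zero_le d)]
    exact .beta (iha (hs.lift 0) (d + 1)) (ihb hs d)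

end ParBeta

def develop : Lam → Lam
  | var n => var n
  | lam a => lam (develop a)
  | app (lam a) b => subst 0 (develop b) (develop a)
  | app (var n) b => app (var n) (develop b)
  | app (app a₁ a₂) b => app (develop (app a₁ a₂)) (develop b)

theorem ParBeta.develop {a b : Lam} (h : ParBeta a b) : ParBeta b (develop a) := by
  induction h with
  | var n => exact .var n
  | lam _ ih => exact .lam ih
  | @app a a' b b' ha _ iha ihb =>
    cases a with
    | var n => cases ha; exact .app iha ihb
    | app a₁ a₂ => exact .app iha ihb
    | lam p =>
      cases ha with
      | lam hp =>
        cases iha with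
        | lam hq => exact .beta hq ihb
  | beta _ _ iha ihb => exact iha.subst ihb 0

theorem confluent_betaStep : Confluent BetaStep := by
  have h : ReflTransGen BetaStep = ReflTransGen ParBeta :=
    le_antisymm (ReflTransGen.mono fun _ _ ↦ ParBeta.of_betaStep)
      (reflTransGen_le_of_le fun _ _ ↦ ParBeta.reflTransGen_betaStep)
  rw [Confluent, h]
  exact confluent_of_diamond fun a _ _ hb hc ↦ ⟨develop a, .single hb.develop, .single hc.develop⟩

theorem EtaStep.subst {a b : Lam} (h : EtaStep a b) (d : ℕ) (s : Lam) :
    EtaStep (Lam.subst d s a) (Lam.subst d s b) :=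
  Compatible.subst (fun d s _ _ h ↦ h.subst d s) h d s

theorem EtaStep.subst_right (t : Lam) {s s' : Lam} (h : EtaStep s s') (d : ℕ) :
    ReflTransGen EtaStep (Lam.subst d s t) (Lam.subst d s' t) :=
  Compatible.subst_right (fun c _ _ h ↦ h.lift c) t h d

theorem EtaStep.exists_of_lift {c : ℕ} {t u : Lam} (h : EtaStep (lift c t) u) :
    ∃ t', u = lift c t' ∧ EtaStep t t' :=
  Compatible.exists_of_lift (fun _ _ _ ↦ EtaRedex.exists_of_lift) h

theorem BetaStep.exists_of_lift {c : ℕ} {t u : Lam} (h : BetaStep (lift c t) u) :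
    ∃ t', u = lift c t' ∧ BetaStep t t' :=
  Compatible.exists_of_lift (fun _ _ _ ↦ BetaRedex.exists_of_lift) h

theorem etaRedex_iff {a b : Lam} : EtaRedex a b ↔ a = lam (app (lift 0 b) (var 0)) :=
  ⟨fun ⟨_⟩ ↦ rfl, fun h ↦ h ▸ .mk b⟩

theorem EtaRedex.unique {a b c : Lam} (hb : EtaRedex a b) (hc : EtaRedex a c) : b = c := by
  rw [etaRedex_iff] at hb hc
  simp only [hb, lam.injEq, app.injEq, and_true] at hc
  exact lift_injective 0 hc

theorem not_etaStep_var {n : ℕ} {b : Lam} : ¬ EtaStep (var n) b := by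
  rintro (⟨⟨⟩⟩)

theorem etaRedex_etaStep_join {a b c : Lam} (hb : EtaRedex a b) (hc : EtaStep a c) :
    ∃ d, ReflGen EtaStep b d ∧ ReflGen EtaStep c d := by
  cases hc with
  | root hc => exact ⟨b, .refl, by rw [hb.unique hc]⟩
  | appL _ _ | appR _ _ => cases hb
  | xi hc =>
    obtain ⟨x⟩ := hb
    cases hc with
    | root hc => cases hc
    | appR _ hc => exact absurd hc not_etaStep_var
    | appL _ hc =>
      obtain ⟨y, rfl, hy⟩ := EtaStep.exists_of_lift hc
      exact ⟨y, .single hy, .single (.root (.mk y))⟩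

theorem etaStep_join {a b c : Lam} (hb : EtaStep a b) (hc : EtaStep a c) :
    ∃ d, ReflGen EtaStep b d ∧ ReflGen EtaStep c d := by
  induction hb generalizing c with
  | root hb => exact etaRedex_etaStep_join hb hc
  | appL b hb ih =>
    cases hc with
    | root hc => cases hc
    | appL _ hc =>
      obtain ⟨d, h₁, h₂⟩ := ih hc
      exact ⟨app d b, h₁.lift (app · b) fun _ _ ↦ .appL b, h₂.lift (app · b) fun _ _ ↦ .appL b⟩
    | appR _ hc => exact ⟨_, .single (.appR _ hc), .single (.appL _ hb)⟩
  | appR a hb ih =>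
    cases hc with
    | root hc => cases hc
    | appL _ hc => exact ⟨_, .single (.appL _ hc), .single (.appR _ hb)⟩
    | appR _ hc =>
      obtain ⟨d, h₁, h₂⟩ := ih hc
      exact ⟨app a d, h₁.lift (app a) fun _ _ ↦ .appR a, h₂.lift (app a) fun _ _ ↦ .appR a⟩
  | xi hb ih =>
    cases hc with
    | root hc =>
      obtain ⟨d, h₁, h₂⟩ := etaRedex_etaStep_join hc (.xi hb)
      exact ⟨d, h₂, h₁⟩
    | xi hc =>
      obtain ⟨d, h₁, h₂⟩ := ih hc
      exact ⟨lam d, h₁.lift lam fun _ _ ↦ .xi, h₂.lift lam fun _ _ ↦ .xi⟩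

theorem confluent_etaStep : Confluent EtaStep :=
  confluent_of_diamond fun _ _ _ ↦ etaStep_join

theorem betaRedex_etaStep_join {a b c : Lam} (hb : BetaRedex a b) (hc : EtaStep a c) :
    ∃ d, ReflTransGen EtaStep b d ∧ ReflGen BetaStep c d := by
  obtain ⟨p, q⟩ := hb
  cases hc with
  | root hc => cases hc
  | @appL _ x _ hc =>
    cases hc with
    | root hc =>
      obtain rfl : p = app (lift 0 x) (var 0) := lam.inj (etaRedex_iff.mp hc)
      refine ⟨app x q, ?_, .refl⟩
      simp only [subst, subst_lift, if_true]
      exact .refl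
    | xi hc => exact ⟨_, .single (EtaStep.subst hc 0 q), .single (.root (.mk _ q))⟩
  | appR _ hc => exact ⟨_, EtaStep.subst_right p hc 0, .single (.root (.mk p _))⟩

theorem betaStep_etaRedex_join {a b c : Lam} (hb : BetaStep a b) (hc : EtaRedex a c) :
    ∃ d, ReflTransGen EtaStep b d ∧ ReflGen BetaStep c d := by
  rw [etaRedex_iff] at hc
  subst hc
  cases hb with
  | root hb => cases hb
  | xi hb =>
    cases hb with
    | root hb =>
      generalize hv : lift 0 c = v at hb
      obtain ⟨m, _⟩ := hb
      obtain ⟨x, rfl, rfl⟩ := lift_eq_lam hv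
      exact ⟨lam x, by rw [subst_var_lift_succ], .refl⟩
    | appL _ hb =>
      obtain ⟨y, rfl, hy⟩ := BetaStep.exists_of_lift hb
      exact ⟨y, .single (.root (.mk y)), .single hy⟩
    | appR _ hb => rcases hb with ⟨⟨⟩⟩

theorem betaStep_etaStep_join {a b c : Lam} (hb : BetaStep a b) (hc : EtaStep a c) :
    ∃ d, ReflTransGen EtaStep b d ∧ ReflGen BetaStep c d := by
  induction hb generalizing c with
  | root hb => exact betaRedex_etaStep_join hb hc
  | appL b hb ih =>
    cases hc with
    | root hc => cases hc
    | appL _ hc =>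
      obtain ⟨d, h₁, h₂⟩ := ih hc
      exact ⟨app d b, Compatible.reflTransGen_app h₁ .refl, h₂.lift (app · b) fun _ _ ↦ .appL b⟩
    | appR _ hc => exact ⟨_, .single (.appR _ hc), .single (.appL _ hb)⟩
  | appR a hb ih =>
    cases hc with
    | root hc => cases hc
    | appL _ hc => exact ⟨_, .single (.appL _ hc), .single (.appR _ hb)⟩
    | appR _ hc =>
      obtain ⟨d, h₁, h₂⟩ := ih hc
      exact ⟨app a d, Compatible.reflTransGen_app .refl h₁, h₂.lift (app a) fun _ _ ↦ .appR a⟩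
  | xi hb ih =>
    cases hc with
    | root hc => exact betaStep_etaRedex_join (.xi hb) hc
    | xi hc =>
      obtain ⟨d, h₁, h₂⟩ := ih hc
      exact ⟨lam d, Compatible.reflTransGen_lam h₁, h₂.lift lam fun _ _ ↦ .xi⟩

theorem confluent_step : Confluent Step := by
  rw [step_eq_sup]
  exact confluent_betaStep.sup confluent_etaStep
    (reflTransGen_commute_of_step fun _ _ _ ↦ betaStep_etaStep_join)

theorem BetaEtaEq.of_reflTransGen {a b : Lam} (h : ReflTransGen Step a b) : BetaEtaEq a b :=
  EqvGen.reflTransGen_le_eqvGen _ _ _ h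

theorem BetaEtaEq.symm {a b : Lam} (h : BetaEtaEq a b) : BetaEtaEq b a := EqvGen.symm _ _ h

theorem BetaEtaEq.trans {a b c : Lam} (hab : BetaEtaEq a b) (hbc : BetaEtaEq b c) :
    BetaEtaEq a c :=
  EqvGen.trans _ _ _ hab hbc

instance : Trans BetaEtaEq BetaEtaEq BetaEtaEq := ⟨BetaEtaEq.trans⟩

theorem BetaEtaEq.app_left {a a' : Lam} (b : Lam) (h : BetaEtaEq a a') :
    BetaEtaEq (app a b) (app a' b) :=
  EqvGen.lift (app · b) (fun _ _ ↦ .appL b) h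

theorem BetaEtaEq.app_right (a : Lam) {b b' : Lam} (h : BetaEtaEq b b') :
    BetaEtaEq (app a b) (app a b') :=
  EqvGen.lift (app a) (fun _ _ ↦ .appR a) h

theorem BetaEtaEq.flat_add {X : Lam} {i j : ℕ} (h : BetaEtaEq (flat X i) (flat X j)) (t : ℕ) :
    BetaEtaEq (flat X (i + t)) (flat X (j + t)) := by
  induction t with
  | zero => exact h
  | succ t ih => exact ih.app_left X

theorem Step.lam_inv {t u : Lam} (h : Step (lam t) u) :
    (∃ t', u = lam t' ∧ Step t t') ∨ t = app (lift 0 u) (var 0) := by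
  cases h with
  | eta => exact .inr rfl
  | xi h => exact .inl ⟨_, rfl, h⟩

theorem Step.lift_lam_app_var_zero (t : Lam) : Step (app (lift 0 (lam t)) (var 0)) t := by
  simpa [lift, subst_var_lift_succ t 0] using Step.beta (lift 1 t) (var 0)

theorem reflTransGen_app_app_lam_lam (t a b : Lam) :
    ReflTransGen Step (app (app (lam (lam t)) a) b) (subst 0 b (subst 1 (lift 0 a) t)) :=
  .head (.appL b (.beta _ a)) (.single (.beta _ b))

end Lam

@[simp] theorem lift_S (c : ℕ) : lift c S = S := by
  simp [S, lift]

@[simp] theorem subst_S (d : ℕ) (s : Lam) : subst d s S = S := by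
  simp [S, subst]

theorem reflTransGen_S_app_app (a b : Lam) : ReflTransGen Step (app (app S a) b)
    (lam (app (app (lift 0 a) (var 0)) (app (lift 0 b) (var 0)))) := by
  simpa [S, subst, lift, subst_lift, ← lift_lift_of_le a le_rfl] using
    reflTransGen_app_app_lam_lam (lam (app (app (var 2) (var 0)) (app (var 1) (var 0)))) a b

theorem reflTransGen_S_S_lam_lam (t : Lam) : ReflTransGen Step (app (app S S) (lam (lam t)))
    (lam (lam (app (app (var 1) (var 0)) t))) := by
  -- `S S M ↠ λz. S z (M z) → λz. S z (λ t) ↠ λz w. z w ((λ t) w) → λz w. z w t` for `M = λλ t`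
  have h₁ := reflTransGen_S_app_app S (lam (lam t))
  have h₂ := reflTransGen_S_app_app (var 0) (lam t)
  rw [lift_S] at h₁
  exact h₁.trans <| .head (.xi (.appR _ (Step.lift_lam_app_var_zero (lam t)))) <|
    (ReflTransGen.lift lam (fun _ _ ↦ .xi) _ _ h₂).tail
      (.xi (.xi (.appR _ (Step.lift_lam_app_var_zero t))))

theorem subst_S_Sbody_succ (n : ℕ) : subst 0 S (subst 1 S (Sbody (n + 1))) =
    app (app S S) (subst 0 S (subst 1 S (Sbody n))) := by
  simp [Sbody, subst]

theorem betaEtaEq_lam_lam_Sbody_app_S_S (n : ℕ) :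
    BetaEtaEq (app (app (lam (lam (Sbody n))) S) S) (lam (lam (Sbody (n + 1)))) := by
  have hred (m : ℕ) : BetaEtaEq (app (app (lam (lam (Sbody m))) S) S)
      (subst 0 S (subst 1 S (Sbody m))) := by
    simpa using BetaEtaEq.of_reflTransGen (reflTransGen_app_app_lam_lam (Sbody m) S S)
  induction n with
  | zero => exact .of_reflTransGen (reflTransGen_S_S_lam_lam (Sbody 0))
  | succ n ih =>
    calc BetaEtaEq (app (app (lam (lam (Sbody (n + 1)))) S) S)
          (app (app S S) (app (app (lam (lam (Sbody n))) S) S)) :=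
          (subst_S_Sbody_succ n ▸ hred (n + 1)).trans ((hred n).symm.app_right _)
      BetaEtaEq _ (app (app S S) (lam (lam (Sbody (n + 1))))) := ih.app_right _
      BetaEtaEq _ (lam (lam (Sbody (n + 2)))) := .of_reflTransGen (reflTransGen_S_S_lam_lam _)

theorem betaEtaEq_flat_S_two_mul (n : ℕ) :
    BetaEtaEq (flat S (2 * n)) (lam (lam (Sbody n))) := by
  induction n with
  | zero => exact .refl _
  | succ n ih =>
    exact ((ih.app_left S).app_left S).trans (betaEtaEq_lam_lam_Sbody_app_S_S n)

theorem Sbody_ne_app_var_zero (n : ℕ) (a : Lam) : Sbody n ≠ app a (var 0) := by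
  cases n with
  | zero => simp [Sbody]
  | succ n => cases n <;> simp [Sbody]

theorem not_step_Sbody (n : ℕ) (u : Lam) : ¬ Step (Sbody n) u := by
  induction n generalizing u with
  | zero =>
    intro h
    rcases h.lam_inv with ⟨_, _, h⟩ | h
    · rcases h with _ | _ | ⟨_, _ | _ | ⟨_, ⟨⟩⟩ | ⟨_, ⟨⟩⟩⟩ | ⟨_, _ | _ | ⟨_, ⟨⟩⟩ | ⟨_, ⟨⟩⟩⟩
    · simp at h
  | succ n ih =>
    rintro (_ | _ | ⟨_, _ | _ | ⟨_, ⟨⟩⟩ | ⟨_, ⟨⟩⟩⟩ | ⟨_, h⟩)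
    exact ih _ h

theorem not_step_lam_lam_Sbody (n : ℕ) (u : Lam) : ¬ Step (lam (lam (Sbody n))) u := by
  intro h
  rcases h.lam_inv with ⟨_, _, h⟩ | h
  · rcases h.lam_inv with ⟨_, _, h⟩ | h
    · exact not_step_Sbody n _ h
    · exact Sbody_ne_app_var_zero n _ h
  · simp at h

theorem Sbody_injective : Function.Injective Sbody := by
  intro m n h
  induction m generalizing n with
  | zero => cases n <;> simp_all [Sbody]
  | succ m ih =>
    cases n with
    | zero => simp [Sbody] at h
    | succ n => simp only [Sbody, app.injEq, true_and] at h; rw [ih h]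

theorem not_betaEtaEq_flat_S_two_mul {m n : ℕ} (h : m ≠ n) :
    ¬ BetaEtaEq (flat S (2 * m)) (flat S (2 * n)) := by
  intro hmn
  have := confluent_step.eq_of_eqvGen (not_step_lam_lam_Sbody m) (not_step_lam_lam_Sbody n)
    (((betaEtaEq_flat_S_two_mul m).symm.trans hmn).trans (betaEtaEq_flat_S_two_mul n))
  simp only [lam.injEq] at this
  exact h (Sbody_injective this)

/-- For n ≥ 1, S_(2n+1) is βη-equivalent to λx.λy. (x y) ((x y) (… ((x y) (λz. x z (y z)))…))
with n occurrences of (x y); hence these terms are pairwise non-equivalent for distinct n,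
so S does not have the ρ-property. (Here `flat S m = S_(m+1)`.) -/
theorem stmt9 :
    (∀ n : ℕ, 1 ≤ n → BetaEtaEq (flat S (2 * n)) (lam (lam (Sbody n)))) ∧
    (∀ m n : ℕ, 1 ≤ m → 1 ≤ n → m ≠ n →
      ¬ BetaEtaEq (flat S (2 * m)) (flat S (2 * n))) ∧
    ¬ ∃ i j : ℕ, i ≠ j ∧ BetaEtaEq (flat S i) (flat S j) := by
  refine ⟨fun n _ ↦ betaEtaEq_flat_S_two_mul n, fun m n _ _ ↦ not_betaEtaEq_flat_S_two_mul, ?_⟩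
  rintro ⟨i, j, hij, h⟩
  have h₁ := h.flat_add (i + 2)
  have h₂ := h.flat_add (j + 2)
  rw [show i + (i + 2) = 2 * (i + 1) by ring, show j + (i + 2) = i + (j + 2) by ring] at h₁
  rw [show j + (j + 2) = 2 * (j + 1) by ring] at h₂
  exact not_betaEtaEq_flat_S_two_mul (by omega) (h₁.trans h₂)
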